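/- Let 0 < α < 1, 0 < p < 1, 0 < q < 1, and integer d ≥ 2 with 1 + α(1-q)∑_{i=0}^{∞}(αp)^i > m and ∑_{i=0}^{∞}(αp)^i ≤ m, where m = ∑_{i=0}^{d-1}α^i (i.e., (p,q,d) ∈ B_4(α)). Then p + q ≤ 1. -/
import Mathlib

theorem stmt_10 (α p q : ℝ) (hα : 0 < α) (hα1 : α < 1)
    (hp : 0 < p) (hp1 : p < 1) (hq : 0 < q) (hq1 : q < 1)
    (d : ℕ) (hd : 2 ≤ d) (m : ℝ) (hm : m = ∑ i ∈ Finset.range d, α ^ i)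
    (hH : 1 + α * (1 - q) * ∑' i : ℕ, (α * p) ^ i > m)
    (hF : (∑' i : ℕ, (α * p) ^ i) ≤ m) :
    p + q ≤ 1 := by
  have hap : 0 ≤ α * p := by positivity
  have hap1 : α * p < 1 :=
    lt_of_lt_of_le (by nlinarith) (le_refl 1)
  have hS : (∑' i : ℕ, (α * p) ^ i) = (1 - α * p)⁻¹ :=
    tsum_geometric_of_lt_one hap hap1
  rw [hS] at hH hF
  have h1 : 0 < 1 - α * p := by linarith
  have hSpos : 0 < (1 - α * p)⁻¹ := inv_pos.mpr h1
  have key : 1 + α * (1 - q) * (1 - α * p)⁻¹ > (1 - α * p)⁻¹ := lt_of_le_of_lt hF hH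
  have h2 : (1 - α * (1 - q)) * (1 - α * p)⁻¹ < 1 := by nlinarith
  have h3 : 1 - α * (1 - q) < 1 - α * p := by
    have hinv : (1 - α * p)⁻¹ * (1 - α * p) = 1 := inv_mul_cancel₀ (ne_of_gt h1)
    nlinarith
  nlinarith
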